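/- arXiv:1507.00781 — 5 statements merged into one kernel-verified Lean document; each statement's English description precedes it below -/
import Mathlib

section
/- Suppose the matrix U_ε of a contraction g → g₀ factors as U_ε = Û_ε · Ǔ_ε, where Û, Ǔ : (0,1] → GL_n(F) are continuous and Ǔ has an invertible limit Ǔ₀ ∈ GL_n(F) as ε → 0⁺. Then Û_ε · Ǔ₀ is also a matrix realizing the contraction g → g₀, i.e., lim_{ε→0⁺} (Û_ε Ǔ₀)⁻¹ μ(Û_ε Ǔ₀ x, Û_ε Ǔ₀ y) = μ₀(x,y) for all x,y. -/
open Matrix Filter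

section Stmt1Aux

variable {n : ℕ}

/-- The transported bracket `x y ↦ A⁻¹ *ᵥ μ (A *ᵥ x) (A *ᵥ y)` as a bilinear map. -/
noncomputable def stmt1Phi (μ : (Fin n → ℝ) →ₗ[ℝ] (Fin n → ℝ) →ₗ[ℝ] (Fin n → ℝ))
    (A : Matrix (Fin n) (Fin n) ℝ) :
    (Fin n → ℝ) →ₗ[ℝ] (Fin n → ℝ) →ₗ[ℝ] (Fin n → ℝ) :=
  (μ.compl₁₂ (Matrix.mulVecLin A) (Matrix.mulVecLin A)).compr₂ (Matrix.mulVecLin A⁻¹)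

lemma stmt1Phi_apply (μ : (Fin n → ℝ) →ₗ[ℝ] (Fin n → ℝ) →ₗ[ℝ] (Fin n → ℝ))
    (A : Matrix (Fin n) (Fin n) ℝ) (x y : Fin n → ℝ) :
    stmt1Phi μ A x y = A⁻¹ *ᵥ μ (A *ᵥ x) (A *ᵥ y) := rfl

lemma stmt1_bil_expand (B : (Fin n → ℝ) →ₗ[ℝ] (Fin n → ℝ) →ₗ[ℝ] (Fin n → ℝ))
    (x y : Fin n → ℝ) :
    B x y = ∑ i, ∑ j, x i • y j • B (Pi.single i 1) (Pi.single j 1) := by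
  have hx : x = ∑ i, x i • (Pi.single i (1:ℝ) : Fin n → ℝ) := by
    conv_lhs => rw [← Finset.univ_sum_single x]
    refine Finset.sum_congr rfl fun i _ => ?_
    rw [← Pi.single_smul, smul_eq_mul, mul_one]
  have hy : y = ∑ j, y j • (Pi.single j (1:ℝ) : Fin n → ℝ) := by
    conv_lhs => rw [← Finset.univ_sum_single y]
    refine Finset.sum_congr rfl fun j _ => ?_
    rw [← Pi.single_smul, smul_eq_mul, mul_one]
  conv_lhs => rw [hx, hy]
  simp only [map_sum, LinearMap.sum_apply, _root_.map_smul, LinearMap.smul_apply,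
    Finset.smul_sum]
  rw [Finset.sum_comm]
  exact Finset.sum_congr rfl fun i _ => Finset.sum_congr rfl fun j _ => smul_comm _ _ _

set_option maxHeartbeats 1000000 in
lemma stmt1_tendsto_mulVec {α : Type*} {l : Filter α}
    {A : α → Matrix (Fin n) (Fin n) ℝ} {v : α → Fin n → ℝ}
    {A₀ : Matrix (Fin n) (Fin n) ℝ} {v₀ : Fin n → ℝ}
    (hA : Tendsto A l (nhds A₀)) (hv : Tendsto v l (nhds v₀)) :
    Tendsto (fun a => A a *ᵥ v a) l (nhds (A₀ *ᵥ v₀)) := by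
  have hcont : Continuous fun p : Matrix (Fin n) (Fin n) ℝ × (Fin n → ℝ) => p.1 *ᵥ p.2 :=
    Continuous.matrix_mulVec continuous_fst continuous_snd
  exact (hcont.tendsto (A₀, v₀)).comp (hA.prodMk_nhds hv)

end Stmt1Aux

/-- If the matrix `U_ε` of a contraction factors as `U_ε = Û_ε Ǔ_ε` where `Ǔ` has an
invertible limit `Ǔ₀` as `ε → 0⁺`, then `Û_ε Ǔ₀` also realizes the same contraction. -/
theorem stmt_1 {n : ℕ}
    (μ : (Fin n → ℝ) →ₗ[ℝ] (Fin n → ℝ) →ₗ[ℝ] (Fin n → ℝ))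
    (hanti : ∀ x, μ x x = 0)
    (hjac : ∀ x y z, μ x (μ y z) + μ y (μ z x) + μ z (μ x y) = 0)
    (μ₀ : (Fin n → ℝ) → (Fin n → ℝ) → (Fin n → ℝ))
    (U Uhat Ucheck : ℝ → Matrix (Fin n) (Fin n) ℝ)
    (hUunit : ∀ ε ∈ Set.Ioc (0:ℝ) 1, IsUnit (U ε))
    (hhatunit : ∀ ε ∈ Set.Ioc (0:ℝ) 1, IsUnit (Uhat ε))
    (hcheckunit : ∀ ε ∈ Set.Ioc (0:ℝ) 1, IsUnit (Ucheck ε))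
    (hfact : ∀ ε ∈ Set.Ioc (0:ℝ) 1, U ε = Uhat ε * Ucheck ε)
    (hhatcont : ContinuousOn Uhat (Set.Ioc (0:ℝ) 1))
    (hcheckcont : ContinuousOn Ucheck (Set.Ioc (0:ℝ) 1))
    (U0check : Matrix (Fin n) (Fin n) ℝ) (hU0check : IsUnit U0check)
    (hchecklim : Filter.Tendsto Ucheck (nhdsWithin 0 (Set.Ioi (0:ℝ))) (nhds U0check))
    (hcontr : ∀ x y, Filter.Tendsto
      (fun ε => (U ε)⁻¹ *ᵥ μ (U ε *ᵥ x) (U ε *ᵥ y))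
      (nhdsWithin 0 (Set.Ioi (0:ℝ))) (nhds (μ₀ x y))) :
    ∀ x y, Filter.Tendsto
      (fun ε => (Uhat ε * U0check)⁻¹ *ᵥ μ ((Uhat ε * U0check) *ᵥ x) ((Uhat ε * U0check) *ᵥ y))
      (nhdsWithin 0 (Set.Ioi (0:ℝ))) (nhds (μ₀ x y)) := by
  intro x y
  set l := nhdsWithin (0:ℝ) (Set.Ioi (0:ℝ)) with hl
  have hmem : Set.Ioc (0:ℝ) 1 ∈ l := Ioc_mem_nhdsGT one_pos
  have hdet0 : IsUnit U0check.det := (Matrix.isUnit_iff_isUnit_det _).mp hU0check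
  -- continuity of the inverse at `U0check`
  have hinvCont : ContinuousAt Inv.inv U0check := by
    apply continuousAt_matrix_inv
    have := NormedRing.inverse_continuousAt hdet0.unit
    simpa [hdet0.unit_spec] using this
  have hinv : Tendsto (fun ε => (Ucheck ε)⁻¹) l (nhds U0check⁻¹) :=
    hinvCont.tendsto.comp hchecklim
  set C : ℝ → Matrix (Fin n) (Fin n) ℝ := fun ε => (Ucheck ε)⁻¹ * U0check with hCdef
  have hC : Tendsto C l (nhds 1) := by
    have h := hinv.mul (tendsto_const_nhds (x := U0check))
    simpa [Matrix.nonsing_inv_mul _ hdet0] using h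
  have hCx : ∀ v : Fin n → ℝ, Tendsto (fun ε => C ε *ᵥ v) l (nhds v) := by
    intro v
    have := stmt1_tendsto_mulVec hC (tendsto_const_nhds (x := v))
    simpa [Matrix.one_mulVec] using this
  -- bilinearity of the limit bracket
  have hμ₀ : μ₀ x y = ∑ i, ∑ j, x i • y j • μ₀ (Pi.single i 1) (Pi.single j 1) := by
    refine tendsto_nhds_unique (hcontr x y) ?_
    have heq : ∀ ε, (U ε)⁻¹ *ᵥ μ (U ε *ᵥ x) (U ε *ᵥ y)
        = ∑ i, ∑ j, x i • y j •
          ((U ε)⁻¹ *ᵥ μ (U ε *ᵥ Pi.single i 1) (U ε *ᵥ Pi.single j 1)) := by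
      intro ε
      simpa [stmt1Phi_apply] using stmt1_bil_expand (stmt1Phi μ (U ε)) x y
    simp_rw [heq]
    exact tendsto_finset_sum _ fun i _ => tendsto_finset_sum _ fun j _ =>
      ((hcontr _ _).const_smul _).const_smul _
  -- convergence of the transported bracket at moving arguments
  have h2 : Tendsto (fun ε => (U ε)⁻¹ *ᵥ μ (U ε *ᵥ (C ε *ᵥ x)) (U ε *ᵥ (C ε *ᵥ y))) l
      (nhds (μ₀ x y)) := by
    have heq : ∀ ε, (U ε)⁻¹ *ᵥ μ (U ε *ᵥ (C ε *ᵥ x)) (U ε *ᵥ (C ε *ᵥ y))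
        = ∑ i, ∑ j, (C ε *ᵥ x) i • (C ε *ᵥ y) j •
          ((U ε)⁻¹ *ᵥ μ (U ε *ᵥ Pi.single i 1) (U ε *ᵥ Pi.single j 1)) := by
      intro ε
      simpa [stmt1Phi_apply] using stmt1_bil_expand (stmt1Phi μ (U ε)) (C ε *ᵥ x) (C ε *ᵥ y)
    simp_rw [heq]
    rw [hμ₀]
    refine tendsto_finset_sum _ fun i _ => tendsto_finset_sum _ fun j _ => ?_
    exact (((continuous_apply i).tendsto x).comp (hCx x)).smul
      ((((continuous_apply j).tendsto y).comp (hCx y)).smul (hcontr _ _))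
  have hmul : Tendsto (fun ε => U0check⁻¹ * Ucheck ε) l (nhds 1) := by
    have h := (tendsto_const_nhds (x := U0check⁻¹)).mul hchecklim
    simpa [Matrix.nonsing_inv_mul _ hdet0] using h
  have h3 := stmt1_tendsto_mulVec hmul h2
  rw [Matrix.one_mulVec] at h3
  refine h3.congr' ?_
  filter_upwards [hmem] with ε hε
  have hdc : IsUnit (Ucheck ε).det := (Matrix.isUnit_iff_isUnit_det _).mp (hcheckunit ε hε)
  have hfac : Uhat ε * U0check = U ε * C ε := by
    rw [hfact ε hε, hCdef, Matrix.mul_assoc, ← Matrix.mul_assoc (Ucheck ε),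
      Matrix.mul_nonsing_inv _ hdc, Matrix.one_mul]
  have hCinv : (C ε)⁻¹ = U0check⁻¹ * Ucheck ε := by
    rw [hCdef, Matrix.mul_inv_rev, Matrix.nonsing_inv_nonsing_inv _ hdc]
  rw [hfac, Matrix.mul_inv_rev, hCinv]
  simp [← Matrix.mulVec_mulVec]
end

section
/- Let U₀ be an n×n matrix and μ a Lie bracket on Fⁿ satisfying the Saletan condition U₀²μ(x,y) − U₀μ(U₀x,y) − U₀μ(x,U₀y) + μ(U₀x,U₀y) = 0 for all x,y. Then for every m ≥ 1, the pair (U₀^m, μ) also satisfies the Saletan condition: U₀^{2m}μ(x,y) − U₀^m μ(U₀^m x,y) − U₀^m μ(x,U₀^m y) + μ(U₀^m x, U₀^m y) = 0 for all x,y. -/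
/-- If `U₀` satisfies the Saletan condition with respect to a Lie bracket `μ`, then so does
every power `U₀^m`, `m ≥ 1`. -/
theorem stmt_4 {F : Type*} [Field F] {n : ℕ}
    (μ : (Fin n → F) →ₗ[F] (Fin n → F) →ₗ[F] (Fin n → F))
    (hanti : ∀ x, μ x x = 0)
    (hjac : ∀ x y z, μ x (μ y z) + μ y (μ z x) + μ z (μ x y) = 0)
    (U₀ : Module.End F (Fin n → F))
    (hsal : ∀ x y, U₀ (U₀ (μ x y)) - U₀ (μ (U₀ x) y) - U₀ (μ x (U₀ y)) + μ (U₀ x) (U₀ y) = 0) :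
    ∀ m : ℕ, 1 ≤ m → ∀ x y,
      (U₀ ^ (2 * m)) (μ x y) - (U₀ ^ m) (μ ((U₀ ^ m) x) y) - (U₀ ^ m) (μ x ((U₀ ^ m) y))
        + μ ((U₀ ^ m) x) ((U₀ ^ m) y) = 0 := by
  have pe : ∀ (b : ℕ) (z : Fin n → F), U₀ ((U₀ ^ b) z) = (U₀ ^ (b + 1)) z := by
    intro b z
    rw [pow_succ']
    rfl
  -- Mixed-index generalization: the "torsion" of the pair `(U₀^i, U₀^j)` vanishes.
  have key : ∀ i j : ℕ, ∀ x y,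
      μ ((U₀ ^ i) x) ((U₀ ^ j) y)
        = (U₀ ^ j) (μ ((U₀ ^ i) x) y) + (U₀ ^ i) (μ x ((U₀ ^ j) y))
          - (U₀ ^ (i + j)) (μ x y) := by
    intro i
    induction i with
    | zero => intro j x y; simp
    | succ i ih =>
      intro j
      induction j with
      | zero => intro x y; simp
      | succ j ihj =>
        intro x y
        have h := hsal ((U₀ ^ i) x) ((U₀ ^ j) y)
        rw [pe i x, pe j y] at h
        rw [ihj x y, ih (j + 1) x y, ih j x y] at h
        simp only [map_add, map_sub, pe] at h
        simp only [show i + 1 + j + 1 = i + 1 + (j + 1) from by omega,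
          show i + (j + 1) + 1 = i + 1 + (j + 1) from by omega,
          show i + j + 1 + 1 = i + 1 + (j + 1) from by omega] at h
        linear_combination h
  intro m hm x y
  have h := key m m x y
  rw [two_mul, h]
  abel
end

section
/- Let U₀ satisfy the Saletan condition with respect to a Lie bracket μ on Fⁿ. Then for each m ≥ 0, the image of U₀^m is a Lie subalgebra of (Fⁿ, μ), and these images form a nested chain: im U₀⁰ ⊇ im U₀¹ ⊇ im U₀² ⊇ ⋯. -/
/-- If `U₀` satisfies the Saletan condition with respect to a Lie bracket `μ`, then for
every `m ≥ 0` the image of `U₀^m` is a Lie subalgebra, and these images form a nested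
chain `im U₀⁰ ⊇ im U₀¹ ⊇ ⋯`. -/
theorem stmt_5 {F : Type*} [Field F] {n : ℕ}
    (μ : (Fin n → F) →ₗ[F] (Fin n → F) →ₗ[F] (Fin n → F))
    (hanti : ∀ x, μ x x = 0)
    (hjac : ∀ x y z, μ x (μ y z) + μ y (μ z x) + μ z (μ x y) = 0)
    (U₀ : Module.End F (Fin n → F))
    (hsal : ∀ x y, U₀ (U₀ (μ x y)) - U₀ (μ (U₀ x) y) - U₀ (μ x (U₀ y)) + μ (U₀ x) (U₀ y) = 0) :
    ∀ m : ℕ,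
      (∀ u v, u ∈ LinearMap.range (U₀ ^ m) → v ∈ LinearMap.range (U₀ ^ m) →
        μ u v ∈ LinearMap.range (U₀ ^ m)) ∧
      LinearMap.range (U₀ ^ (m + 1)) ≤ LinearMap.range (U₀ ^ m) := by
  have hcomm : ∀ (m : ℕ) (x : Fin n → F), U₀ ((U₀ ^ m) x) = (U₀ ^ m) (U₀ x) := by
    intro m x
    have h1 : (U₀ ^ (m + 1)) x = U₀ ((U₀ ^ m) x) := by
      rw [pow_succ']; rfl
    have h2 : (U₀ ^ (m + 1)) x = (U₀ ^ m) (U₀ x) := by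
      rw [pow_succ]; rfl
    rw [← h1, h2]
  have key : ∀ m : ℕ, ∀ x y, μ ((U₀ ^ m) x) ((U₀ ^ m) y) ∈ LinearMap.range (U₀ ^ m) := by
    intro m
    induction m with
    | zero => intro x y; simp
    | succ m ih =>
      intro x y
      have hs := hsal ((U₀ ^ m) x) ((U₀ ^ m) y)
      have heq : μ (U₀ ((U₀ ^ m) x)) (U₀ ((U₀ ^ m) y))
          = U₀ (μ (U₀ ((U₀ ^ m) x)) ((U₀ ^ m) y) + μ ((U₀ ^ m) x) (U₀ ((U₀ ^ m) y))
              - U₀ (μ ((U₀ ^ m) x) ((U₀ ^ m) y))) := by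
        rw [map_sub, map_add]
        linear_combination hs
      -- the element inside is in range (U₀ ^ m)
      have hmem : μ (U₀ ((U₀ ^ m) x)) ((U₀ ^ m) y) + μ ((U₀ ^ m) x) (U₀ ((U₀ ^ m) y))
              - U₀ (μ ((U₀ ^ m) x) ((U₀ ^ m) y)) ∈ LinearMap.range (U₀ ^ m) := by
        have h1 : μ (U₀ ((U₀ ^ m) x)) ((U₀ ^ m) y) ∈ LinearMap.range (U₀ ^ m) := by
          rw [hcomm]; exact ih (U₀ x) y
        have h2 : μ ((U₀ ^ m) x) (U₀ ((U₀ ^ m) y)) ∈ LinearMap.range (U₀ ^ m) := by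
          rw [hcomm]; exact ih x (U₀ y)
        have h3 : U₀ (μ ((U₀ ^ m) x) ((U₀ ^ m) y)) ∈ LinearMap.range (U₀ ^ m) := by
          obtain ⟨c, hc⟩ := ih x y
          rw [← hc, hcomm]
          exact ⟨U₀ c, rfl⟩
        exact Submodule.sub_mem _ (Submodule.add_mem _ h1 h2) h3
      obtain ⟨w, hw⟩ := hmem
      have hx : (U₀ ^ (m + 1)) x = U₀ ((U₀ ^ m) x) := by rw [pow_succ']; rfl
      have hy : (U₀ ^ (m + 1)) y = U₀ ((U₀ ^ m) y) := by rw [pow_succ']; rfl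
      rw [hx, hy, heq, ← hw]
      refine ⟨w, ?_⟩
      rw [pow_succ']; rfl
  intro m
  constructor
  · rintro u v ⟨x, rfl⟩ ⟨y, rfl⟩
    exact key m x y
  · rintro z ⟨x, rfl⟩
    have : (U₀ ^ (m + 1)) x = (U₀ ^ m) (U₀ x) := by rw [pow_succ]; rfl
    rw [this]
    exact ⟨U₀ x, rfl⟩
end

section
/- Let J be the n×n nilpotent Jordan block and suppose the bracket μ on Fⁿ satisfies the Saletan condition with U₀ = J. Define μ₀(x,y) = μ(Jx, y) + μ(x, Jy) − Jμ(x, y). Then μ₀ is again a Lie bracket and satisfies the same Saletan condition with U₀ = J. Consequently, iterating this construction n times yields the zero (Abelian) bracket. -/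
open Matrix

/-- One step of the Saletan contraction with matrix `J`:
`μ₀(x,y) = μ(Jx,y) + μ(x,Jy) - Jμ(x,y)`. -/
def saletanStep {F : Type*} [Field F] {n : ℕ} (J : Matrix (Fin n) (Fin n) F)
    (m : (Fin n → F) → (Fin n → F) → (Fin n → F)) :
    (Fin n → F) → (Fin n → F) → (Fin n → F) :=
  fun x y => m (J *ᵥ x) y + m x (J *ᵥ y) - J *ᵥ m x y

/-- If the Lie bracket `μ` on `Fⁿ` satisfies the Saletan condition with `U₀ = J` the
nilpotent Jordan block, then `μ₀(x,y) = μ(Jx,y) + μ(x,Jy) - Jμ(x,y)` is again a Lie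
bracket satisfying the same Saletan condition, and iterating the construction `n` times
yields the zero (Abelian) bracket. -/
theorem stmt_15 {F : Type*} [Field F] {n : ℕ}
    (J : Matrix (Fin n) (Fin n) F)
    (hJ : ∀ i j, J i j = if (j : ℕ) = (i : ℕ) + 1 then 1 else 0)
    (μ : (Fin n → F) →ₗ[F] (Fin n → F) →ₗ[F] (Fin n → F))
    (hanti : ∀ x, μ x x = 0)
    (hjac : ∀ x y z, μ x (μ y z) + μ y (μ z x) + μ z (μ x y) = 0)
    (hsal : ∀ x y,
      J *ᵥ (J *ᵥ μ x y) - J *ᵥ μ (J *ᵥ x) y - J *ᵥ μ x (J *ᵥ y) + μ (J *ᵥ x) (J *ᵥ y) = 0) :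
    (∀ (a b : F) (x x' y : Fin n → F),
      saletanStep J (fun u v => μ u v) (a • x + b • x') y =
        a • saletanStep J (fun u v => μ u v) x y + b • saletanStep J (fun u v => μ u v) x' y) ∧
    (∀ (a b : F) (x y y' : Fin n → F),
      saletanStep J (fun u v => μ u v) x (a • y + b • y') =
        a • saletanStep J (fun u v => μ u v) x y + b • saletanStep J (fun u v => μ u v) x y') ∧
    (∀ x, saletanStep J (fun u v => μ u v) x x = 0) ∧
    (∀ x y z,
      saletanStep J (fun u v => μ u v) x (saletanStep J (fun u v => μ u v) y z) +
      saletanStep J (fun u v => μ u v) y (saletanStep J (fun u v => μ u v) z x) +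
      saletanStep J (fun u v => μ u v) z (saletanStep J (fun u v => μ u v) x y) = 0) ∧
    (∀ x y,
      J *ᵥ (J *ᵥ saletanStep J (fun u v => μ u v) x y)
        - J *ᵥ saletanStep J (fun u v => μ u v) (J *ᵥ x) y
        - J *ᵥ saletanStep J (fun u v => μ u v) x (J *ᵥ y)
        + saletanStep J (fun u v => μ u v) (J *ᵥ x) (J *ᵥ y) = 0) ∧
    (saletanStep J)^[n] (fun u v => μ u v) = fun _ _ => 0 := by
  have expand1 : ∀ a b : Fin n → F, saletanStep J (fun u v => μ u v) a b
      = μ (J *ᵥ a) b + μ a (J *ᵥ b) - J *ᵥ μ a b := fun a b => rfl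
  have key : ∀ x y : Fin n → F, J *ᵥ saletanStep J (fun u v => μ u v) x y
      = μ (J *ᵥ x) (J *ᵥ y) := by
    intro x y
    rw [expand1]
    simp only [mulVec_add, mulVec_sub]
    linear_combination -hsal x y
  refine ⟨?_, ?_, ?_, ?_, ?_, ?_⟩
  · intro a b x x' y
    simp only [expand1, mulVec_add, mulVec_smul, map_add, _root_.map_smul,
      LinearMap.add_apply, LinearMap.smul_apply, smul_add, smul_sub]
    module
  · intro a b x y y'
    simp only [expand1, mulVec_add, mulVec_smul, map_add, _root_.map_smul,
      LinearMap.add_apply, LinearMap.smul_apply, smul_add, smul_sub]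
    module
  · intro x
    have h := hanti (J *ᵥ x + x)
    simp only [map_add, LinearMap.add_apply, hanti] at h
    rw [expand1, hanti, mulVec_zero]
    linear_combination h
  · intro x y z
    have hjacJ : ∀ x y z : Fin n → F,
        J *ᵥ μ x (μ y z) + J *ᵥ μ y (μ z x) + J *ᵥ μ z (μ x y) = 0 := by
      intro x y z
      rw [← mulVec_add, ← mulVec_add, hjac, mulVec_zero]
    have hjacJJ : J *ᵥ (J *ᵥ μ x (μ y z)) + J *ᵥ (J *ᵥ μ y (μ z x))
        + J *ᵥ (J *ᵥ μ z (μ x y)) = 0 := by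
      rw [← mulVec_add, ← mulVec_add, ← mulVec_add, ← mulVec_add, hjac,
        mulVec_zero, mulVec_zero]
    rw [expand1 x (saletanStep J (fun u v => μ u v) y z),
      expand1 y (saletanStep J (fun u v => μ u v) z x),
      expand1 z (saletanStep J (fun u v => μ u v) x y),
      key y z, key z x, key x y,
      expand1 y z, expand1 z x, expand1 x y]
    simp only [map_add, map_sub, mulVec_add, mulVec_sub, LinearMap.add_apply,
      LinearMap.sub_apply]
    linear_combination (hjac (J *ᵥ x) (J *ᵥ y) z) + (hjac (J *ᵥ x) y (J *ᵥ z))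
      + (hjac x (J *ᵥ y) (J *ᵥ z))
      - (hjacJ (J *ᵥ x) y z) - (hjacJ x (J *ᵥ y) z) - (hjacJ x y (J *ᵥ z))
      + hjacJJ
      - (hsal x (μ y z)) - (hsal y (μ z x)) - (hsal z (μ x y))
  · intro x y
    rw [key x y, key (J *ᵥ x) y, key x (J *ᵥ y), expand1 (J *ᵥ x) (J *ᵥ y)]
    abel
  · have hA : ∀ (k : ℕ) (w : Fin n → F), J *ᵥ ((J ^ k) *ᵥ w) = (J ^ (k + 1)) *ᵥ w := by
      intro k w; rw [mulVec_mulVec, ← pow_succ']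
    have hB : ∀ (k : ℕ) (w : Fin n → F), (J ^ k) *ᵥ (J *ᵥ w) = (J ^ (k + 1)) *ᵥ w := by
      intro k w; rw [mulVec_mulVec, ← pow_succ]
    have hsal' : ∀ x y : Fin n → F, μ (J *ᵥ x) (J *ᵥ y)
        = J *ᵥ μ (J *ᵥ x) y + J *ᵥ μ x (J *ᵥ y) - J *ᵥ (J *ᵥ μ x y) := by
      intro x y; linear_combination hsal x y
    have GS : ∀ (k : ℕ) (x y : Fin n → F), μ (J *ᵥ x) ((J ^ k) *ᵥ y)
        = J *ᵥ μ x ((J ^ k) *ᵥ y) + (J ^ k) *ᵥ μ (J *ᵥ x) y - (J ^ (k + 1)) *ᵥ μ x y := by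
      intro k
      induction k with
      | zero =>
        intro x y
        simp only [zero_add, pow_zero, pow_one, one_mulVec]
        abel
      | succ k ih =>
        intro x y
        have h1 := ih x (J *ᵥ y)
        rw [hB k y] at h1
        have h3 := congrArg (fun v => (J ^ k) *ᵥ v) (hsal' x y)
        simp only [mulVec_add, mulVec_sub, hB] at h3
        linear_combination h1 + h3
    have GS' : ∀ (k : ℕ) (x y : Fin n → F), μ ((J ^ k) *ᵥ x) (J *ᵥ y)
        = J *ᵥ μ ((J ^ k) *ᵥ x) y + (J ^ k) *ᵥ μ x (J *ᵥ y) - (J ^ (k + 1)) *ᵥ μ x y := by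
      intro k
      induction k with
      | zero =>
        intro x y
        simp only [zero_add, pow_zero, pow_one, one_mulVec]
        abel
      | succ k ih =>
        intro x y
        have h1 := ih (J *ᵥ x) y
        rw [hB k x] at h1
        have h3 := congrArg (fun v => (J ^ k) *ᵥ v) (hsal' x y)
        simp only [mulVec_add, mulVec_sub, hB] at h3
        linear_combination h1 + h3
    have Fk : ∀ (k : ℕ) (x y : Fin n → F), (saletanStep J)^[k] (fun u v => μ u v) x y
        = μ ((J ^ k) *ᵥ x) y + μ x ((J ^ k) *ᵥ y) - (J ^ k) *ᵥ μ x y := by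
      intro k
      induction k with
      | zero =>
        intro x y
        simp only [Function.iterate_zero, id_eq, pow_zero, one_mulVec]
        abel
      | succ k ih =>
        intro x y
        rw [Function.iterate_succ_apply']
        show (saletanStep J)^[k] (fun u v => μ u v) (J *ᵥ x) y
            + (saletanStep J)^[k] (fun u v => μ u v) x (J *ᵥ y)
            - J *ᵥ (saletanStep J)^[k] (fun u v => μ u v) x y = _
        rw [ih (J *ᵥ x) y, ih x (J *ᵥ y), ih x y]
        simp only [hB, mulVec_add, mulVec_sub, hA]
        linear_combination GS k x y + GS' k x y
    have powJ : ∀ (k : ℕ) (i j : Fin n), (J ^ k) i j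
        = if (j : ℕ) = (i : ℕ) + k then 1 else 0 := by
      intro k
      induction k with
      | zero =>
        intro i j
        simp only [pow_zero, Matrix.one_apply, Nat.add_zero]
        by_cases h : i = j
        · subst h; simp
        · rw [if_neg h, if_neg (fun hc => h (Fin.ext hc.symm))]
      | succ k ih =>
        intro i j
        rw [pow_succ, Matrix.mul_apply]
        have hsum : ∀ b : Fin n, (J ^ k) i b * J b j
            = if ((b : ℕ) = (i : ℕ) + k ∧ (j : ℕ) = (i : ℕ) + (k + 1)) then 1 else 0 := by
          intro b
          rw [ih, hJ]
          by_cases h1 : (b : ℕ) = (i : ℕ) + k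
          · by_cases h2 : (j : ℕ) = (i : ℕ) + (k + 1)
            · rw [if_pos h1, if_pos (show (j : ℕ) = (b : ℕ) + 1 by omega), if_pos ⟨h1, h2⟩]
              ring
            · rw [if_pos h1, if_neg (show ¬(j : ℕ) = (b : ℕ) + 1 by omega), if_neg (by tauto)]
              ring
          · rw [if_neg h1, zero_mul, if_neg (fun hc => h1 hc.1)]
        simp only [hsum]
        by_cases h2 : (j : ℕ) = (i : ℕ) + (k + 1)
        · have hlt : (i : ℕ) + k < n := by have := j.isLt; omega
          rw [Finset.sum_eq_single (⟨(i : ℕ) + k, hlt⟩ : Fin n)]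
          · simp [h2]
          · intro b _ hb
            rw [if_neg]
            rintro ⟨hb1, -⟩
            exact hb (Fin.ext (by simpa using hb1))
          · intro hm; exact absurd (Finset.mem_univ _) hm
        · rw [if_neg h2]
          exact Finset.sum_eq_zero fun b _ => if_neg (by tauto)
    have Jn0 : J ^ n = 0 := by
      ext i j
      rw [powJ n i j, if_neg (by have := j.isLt; omega)]
      rfl
    funext x y
    rw [Fk n x y, Jn0]
    simp
end

section
/- Every contraction between Lie brackets on a finite-dimensional space preserves or decreases the dimension of the derived algebra: if μ₀ is a contraction of μ (i.e., μ₀(x,y) = lim_{ε→0⁺} U_ε⁻¹ μ(U_ε x, U_ε y) for a continuous family U_ε ∈ GL(V)), then dim [V,V]_{μ₀} ≤ dim [V,V]_μ. -/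
/-- A contraction preserves or decreases the dimension of the derived algebra: if `μ₀` is
a contraction of `μ` via a continuous family `U_ε ∈ GL(V)`, then
`dim [V,V]_{μ₀} ≤ dim [V,V]_μ`. -/
theorem stmt_18 {V : Type*} [NormedAddCommGroup V] [NormedSpace ℝ V] [FiniteDimensional ℝ V]
    (μ μ₀ : V →ₗ[ℝ] V →ₗ[ℝ] V)
    (hμanti : ∀ x, μ x x = 0)
    (hμjac : ∀ x y z, μ x (μ y z) + μ y (μ z x) + μ z (μ x y) = 0)
    (hμ₀anti : ∀ x, μ₀ x x = 0)
    (hμ₀jac : ∀ x y z, μ₀ x (μ₀ y z) + μ₀ y (μ₀ z x) + μ₀ z (μ₀ x y) = 0)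
    (U : ℝ → (V ≃ₗ[ℝ] V))
    (hUcont : ∀ x : V, ContinuousOn (fun ε => U ε x) (Set.Ioc (0:ℝ) 1))
    (hlim : ∀ x y : V, Filter.Tendsto (fun ε => (U ε).symm (μ (U ε x) (U ε y)))
      (nhdsWithin 0 (Set.Ioi (0:ℝ))) (nhds (μ₀ x y))) :
    Module.finrank ℝ (Submodule.span ℝ {z : V | ∃ x y, μ₀ x y = z}) ≤
      Module.finrank ℝ (Submodule.span ℝ {z : V | ∃ x y, μ x y = z}) := by
  classical
  set S₀ : Set V := {z : V | ∃ x y, μ₀ x y = z} with hS₀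
  set S : Set V := {z : V | ∃ x y, μ x y = z} with hS
  obtain ⟨t, hts, htspan, htindep⟩ := exists_linearIndependent ℝ S₀
  have htfin : t.Finite := htindep.setFinite
  haveI : Fintype t := htfin.fintype
  -- choose pairs
  have hchoice : ∀ i : t, ∃ x y : V, μ₀ x y = (i : V) := fun i => hts i.2
  choose x y hxy using hchoice
  -- the approximating families
  set F : ℝ → t → V := fun ε i => (U ε).symm (μ (U ε (x i)) (U ε (y i))) with hF
  have hFt : Filter.Tendsto F (nhdsWithin 0 (Set.Ioi (0:ℝ)))
      (nhds (fun i : t => (i : V))) := by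
    rw [tendsto_pi_nhds]
    intro i
    simpa [hxy i] using hlim (x i) (y i)
  have hindep : LinearIndependent ℝ (fun i : t => (i : V)) := htindep
  have hopen : IsOpen {f : t → V | LinearIndependent ℝ f} :=
    isOpen_setOf_linearIndependent
  have hev : ∀ᶠ ε in nhdsWithin 0 (Set.Ioi (0:ℝ)),
      LinearIndependent ℝ (F ε) :=
    hFt.eventually (hopen.mem_nhds hindep)
  obtain ⟨ε, hεindep⟩ := hev.exists
  -- F ε lands in (U ε).symm image of span S
  have hmem : ∀ i : t, F ε i ∈
      (Submodule.span ℝ S).map ((U ε).symm : V →ₗ[ℝ] V) := by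
    intro i
    refine ⟨μ (U ε (x i)) (U ε (y i)), ?_, rfl⟩
    exact Submodule.subset_span ⟨_, _, rfl⟩
  have hspanle : Submodule.span ℝ (Set.range (F ε)) ≤
      (Submodule.span ℝ S).map ((U ε).symm : V →ₗ[ℝ] V) := by
    rw [Submodule.span_le]
    rintro _ ⟨i, rfl⟩
    exact hmem i
  have h1 : Module.finrank ℝ (Submodule.span ℝ S₀) = Fintype.card t := by
    rw [← htspan, show Submodule.span ℝ t = Submodule.span ℝ (Set.range (fun i : t => (i : V)))
      by rw [Subtype.range_coe]]
    exact finrank_span_eq_card hindep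
  have h2 : Module.finrank ℝ (Submodule.span ℝ (Set.range (F ε))) = Fintype.card t :=
    finrank_span_eq_card hεindep
  have h3 : Module.finrank ℝ ((Submodule.span ℝ S).map ((U ε).symm : V →ₗ[ℝ] V)) =
      Module.finrank ℝ (Submodule.span ℝ S) :=
    LinearEquiv.finrank_map_eq (U ε).symm _
  calc Module.finrank ℝ (Submodule.span ℝ S₀) = Fintype.card t := h1
    _ = Module.finrank ℝ (Submodule.span ℝ (Set.range (F ε))) := h2.symm
    _ ≤ Module.finrank ℝ ((Submodule.span ℝ S).map ((U ε).symm : V →ₗ[ℝ] V)) :=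
        Submodule.finrank_mono hspanle
    _ = Module.finrank ℝ (Submodule.span ℝ S) := h3
end
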